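/- arXiv:1905.11767 — 7 statements merged into one kernel-verified Lean document; each statement's English description precedes it below -/
import Mathlib

section
/- Let q ≥ 3. Let λ₂ be a real number with q−1 < λ₂ < q satisfying λ₂³ − qλ₂² + 2λ₂ − 1 = 0, and let λ₁ be the unique root of p₁(z) = z² − (q−1)z − (q−2) in (q−1, q). Then p₁(λ₂) < 0, and hence λ₂ < λ₁. -/
/-- For `q ≥ 3`: if `λ₂ ∈ (q−1, q)` satisfies `λ₂³ − qλ₂² + 2λ₂ − 1 = 0`, and `λ₁` is
the unique root of `p₁(z) = z² − (q−1)z − (q−2)` in `(q−1, q)`, then `p₁(λ₂) < 0`, and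
hence `λ₂ < λ₁`. -/
theorem lam2_lt_lam1 (q lam1 lam2 : ℝ) (hq : 3 ≤ q)
    (h2l : q - 1 < lam2) (h2r : lam2 < q)
    (h2root : lam2 ^ 3 - q * lam2 ^ 2 + 2 * lam2 - 1 = 0)
    (h1l : q - 1 < lam1) (h1r : lam1 < q)
    (h1root : lam1 ^ 2 - (q - 1) * lam1 - (q - 2) = 0)
    (h1uniq : ∀ x : ℝ, q - 1 < x → x < q →
      x ^ 2 - (q - 1) * x - (q - 2) = 0 → x = lam1) :
    lam2 ^ 2 - (q - 1) * lam2 - (q - 2) < 0 ∧ lam2 < lam1 := by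
  have hpos : (2:ℝ) ≤ lam2 := by linarith
  have key : lam2 ^ 2 - (q - 1) * lam2 - (q - 2) < 0 := by
    nlinarith [sq_nonneg lam2, mul_pos (by linarith : (0:ℝ) < lam2) (by linarith : (0:ℝ) < lam2)]
  refine ⟨key, ?_⟩
  by_contra h
  push_neg at h
  nlinarith [mul_nonneg (by linarith : (0:ℝ) ≤ lam2 - lam1) (by linarith : (0:ℝ) ≤ lam2 + lam1 - (q - 1))]
end

section
/- Let a(z), d(z) be monic polynomials of degree p−1 with coefficients in {0,1}, and let b(z), c(z) be polynomials of degree at most p−2 with coefficients in {0,1}, where p ≥ 3. Then for every complex z with |z| = 4, |a(z)·d(z) − b(z)·c(z)| ≥ (1/48)·4^{2p} > 0. -/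
open Polynomial

lemma eval_abs_upper (q : Polynomial ℂ) (n : ℕ) (hq : q.natDegree < n)
    (hc : ∀ k, q.coeff k = 0 ∨ q.coeff k = 1) (z : ℂ) (hz : ‖z‖ = 4) :
    ‖q.eval z‖ ≤ ((4:ℝ) ^ n - 1) / 3 := by
  rw [Polynomial.eval_eq_sum_range' hq]
  calc ‖∑ i ∈ Finset.range n, q.coeff i * z ^ i‖
      ≤ ∑ i ∈ Finset.range n, ‖q.coeff i * z ^ i‖ :=
        norm_sum_le _ _
    _ ≤ ∑ i ∈ Finset.range n, (4:ℝ) ^ i := by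
        refine Finset.sum_le_sum fun i _ => ?_
        rw [norm_mul, norm_pow, hz]
        rcases hc i with h | h <;> simp [h]
    _ = ((4:ℝ) ^ n - 1) / 3 := by
        rw [geom_sum_eq (by norm_num)]; norm_num

lemma eval_abs_lower (q : Polynomial ℂ) (m : ℕ) (hm : 0 < m) (hq : q.Monic)
    (hdeg : q.natDegree = m)
    (hc : ∀ k, q.coeff k = 0 ∨ q.coeff k = 1) (z : ℂ) (hz : ‖z‖ = 4) :
    (2 * (4:ℝ) ^ m + 1) / 3 ≤ ‖q.eval z‖ := by
  have hlt : q.eraseLead.natDegree < m := by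
    have h := q.eraseLead_natDegree_le
    rw [hdeg] at h
    omega
  have hcoeff : ∀ k, q.eraseLead.coeff k = 0 ∨ q.eraseLead.coeff k = 1 := by
    intro k
    rw [Polynomial.eraseLead_coeff]
    split
    · left; rfl
    · exact hc k
  have hub := eval_abs_upper q.eraseLead m hlt hcoeff z hz
  have heq : q.eval z = q.eraseLead.eval z + z ^ m := by
    conv_lhs => rw [← q.eraseLead_add_C_mul_X_pow]
    simp [hq.leadingCoeff, hdeg]
  have habs : (4:ℝ) ^ m = ‖z ^ m‖ := by rw [norm_pow, hz]
  have h2 : ‖z ^ m‖ ≤ ‖q.eval z‖ + ‖q.eraseLead.eval z‖ := by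
    have h3 : z ^ m = q.eval z - q.eraseLead.eval z := by rw [heq]; ring
    rw [h3, sub_eq_add_neg]
    calc ‖q.eval z + -q.eraseLead.eval z‖
        ≤ ‖q.eval z‖ + ‖-q.eraseLead.eval z‖ :=
          norm_add_le _ _
      _ = _ := by rw [norm_neg]
  rw [← habs] at h2
  linarith

/-- Let `a, d` be monic polynomials of degree `p − 1` with coefficients in `{0,1}` and
`b, c` polynomials of degree at most `p − 2` with coefficients in `{0,1}`, `p ≥ 3`.
Then for every complex `z` with `|z| = 4`,
`|a(z)d(z) − b(z)c(z)| ≥ (1/48)·4^{2p} > 0`. -/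
theorem delta_lower_bound (p : ℕ) (hp : 3 ≤ p) (a b c d : Polynomial ℂ)
    (ha : a.Monic) (hadeg : a.natDegree = p - 1)
    (hd : d.Monic) (hddeg : d.natDegree = p - 1)
    (hbdeg : b.natDegree ≤ p - 2) (hcdeg : c.natDegree ≤ p - 2)
    (hac : ∀ k, a.coeff k = 0 ∨ a.coeff k = 1)
    (hbc : ∀ k, b.coeff k = 0 ∨ b.coeff k = 1)
    (hcc : ∀ k, c.coeff k = 0 ∨ c.coeff k = 1)
    (hdc : ∀ k, d.coeff k = 0 ∨ d.coeff k = 1) :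
    ∀ z : ℂ, ‖z‖ = 4 →
      (1 / 48 : ℝ) * 4 ^ (2 * p) ≤ ‖a.eval z * d.eval z - b.eval z * c.eval z‖
      ∧ (0 : ℝ) < (1 / 48 : ℝ) * 4 ^ (2 * p) := by
  intro z hz
  set m : ℕ := p - 1 with hm
  have hm2 : 2 ≤ m := by omega
  have hmp : p = m + 1 := by omega
  have hbd : b.natDegree < m := by omega
  have hcd : c.natDegree < m := by omega
  have hA := eval_abs_lower a m (by omega) ha hadeg hac z hz
  have hD := eval_abs_lower d m (by omega) hd hddeg hdc z hz
  have hB := eval_abs_upper b m hbd hbc z hz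
  have hC := eval_abs_upper c m hcd hcc z hz
  have hB0 : (0:ℝ) ≤ ‖b.eval z‖ := norm_nonneg _
  have hC0 : (0:ℝ) ≤ ‖c.eval z‖ := norm_nonneg _
  have h4 : (0:ℝ) < (4:ℝ) ^ m := by positivity
  have key : ‖a.eval z * d.eval z‖ - ‖b.eval z * c.eval z‖
      ≤ ‖a.eval z * d.eval z - b.eval z * c.eval z‖ := by
    have h := norm_add_le (a.eval z * d.eval z - b.eval z * c.eval z)
      (b.eval z * c.eval z)
    rw [sub_add_cancel] at h
    linarith
  have hexp : (4:ℝ) ^ (2 * p) = 16 * ((4:ℝ) ^ m * (4:ℝ) ^ m) := by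
    rw [← pow_add, hmp]; ring_nf
  constructor
  · rw [norm_mul, norm_mul] at key
    have hBC : ‖b.eval z‖ * ‖c.eval z‖
        ≤ (((4:ℝ) ^ m - 1) / 3) * (((4:ℝ) ^ m - 1) / 3) := by
      apply mul_le_mul hB hC hC0 (by linarith)
    have hAD : ((2 * (4:ℝ) ^ m + 1) / 3) * ((2 * (4:ℝ) ^ m + 1) / 3)
        ≤ ‖a.eval z‖ * ‖d.eval z‖ := by
      apply mul_le_mul hA hD (by linarith) (norm_nonneg _)
    rw [hexp]
    nlinarith [key]
  · rw [hexp]; nlinarith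
end

section
/- With the hypotheses of the previous statement (p ≥ 3, q ≥ 5, a,d monic of degree p−1 with 0/1 coefficients, b,c of degree ≤ p−2 with 0/1 coefficients), the unique root λ of (z−q)Δ(z) + S(z) with |z| ≥ 4 satisfies q − q^{−p+2} < λ < q. -/
open Polynomial

set_option maxHeartbeats 1000000

lemma eight_mul_le_four_pow (n : ℕ) (h : 2 ≤ n) : 8 * n ≤ 4 ^ n := by
  induction n with
  | zero => omega
  | succ m ih =>
    rcases Nat.lt_or_ge m 2 with hm | hm
    · interval_cases m <;> simp_all
    · have h1 : 8 * m ≤ 4 ^ m := ih hm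
      have h2 : 8 ≤ 4 ^ m := le_trans (by norm_num) (Nat.pow_le_pow_right (by norm_num) hm)
      calc 8 * (m + 1) = 8 * m + 8 := by ring
        _ ≤ 4 ^ m + 4 ^ m := Nat.add_le_add h1 h2
        _ = 2 * 4 ^ m := by ring
        _ ≤ 4 * 4 ^ m := Nat.mul_le_mul (by norm_num) le_rfl
        _ = 4 ^ (m + 1) := by rw [pow_succ]; ring

lemma sum01_bounds (g : ℕ → ℂ) (h01 : ∀ k, g k = 0 ∨ g k = 1) (n : ℕ)
    (x : ℝ) (hx : 4 ≤ x) :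
    0 ≤ ∑ k ∈ Finset.range n, (g k).re * x ^ k ∧
      ∑ k ∈ Finset.range n, (g k).re * x ^ k < x ^ n / 3 := by
  have hx0 : (0:ℝ) < x := by linarith
  constructor
  · apply Finset.sum_nonneg
    intro k _
    rcases h01 k with h | h <;> simp [h]
    positivity
  · have hle : ∑ k ∈ Finset.range n, (g k).re * x ^ k ≤ ∑ k ∈ Finset.range n, x ^ k := by
      apply Finset.sum_le_sum
      intro k _
      rcases h01 k with h | h <;> simp [h]
      positivity
    have hgeom : ∑ k ∈ Finset.range n, x ^ k = (x ^ n - 1) / (x - 1) :=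
      geom_sum_eq (by intro hc; rw [hc] at hx; norm_num at hx) n
    have h1n : (1:ℝ) ≤ x ^ n := one_le_pow₀ (by linarith)
    have h3 : (x ^ n - 1) / (x - 1) ≤ (x ^ n - 1) / 3 :=
      div_le_div_of_nonneg_left (by linarith) (by norm_num) (by linarith)
    have h4 : (x ^ n - 1) / 3 < x ^ n / 3 := by linarith
    linarith [hle, hgeom ▸ hle]

lemma eval01 (f : Polynomial ℂ) (h01 : ∀ k, f.coeff k = 0 ∨ f.coeff k = 1)
    (n : ℕ) (hn : f.natDegree < n) (x : ℝ) (hx : 4 ≤ x) :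
    ∃ F : ℝ, f.eval (x : ℂ) = (F : ℂ) ∧ 0 ≤ F ∧ F < x ^ n / 3 := by
  obtain ⟨h0, h1⟩ := sum01_bounds f.coeff h01 n x hx
  refine ⟨∑ k ∈ Finset.range n, (f.coeff k).re * x ^ k, ?_, h0, h1⟩
  rw [Polynomial.eval_eq_sum_range' hn]
  push_cast
  refine Finset.sum_congr rfl fun k _ => ?_
  rcases h01 k with h | h <;> simp [h]

lemma evalMonic (f : Polynomial ℂ) (hm : f.Monic)
    (h01 : ∀ k, f.coeff k = 0 ∨ f.coeff k = 1) (x : ℝ) (hx : 4 ≤ x) :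
    ∃ F : ℝ, f.eval (x : ℂ) = (F : ℂ) ∧ x ^ f.natDegree ≤ F ∧
      F < 4 / 3 * x ^ f.natDegree := by
  set n := f.natDegree with hn
  obtain ⟨h0, h1⟩ := sum01_bounds f.coeff h01 n x hx
  refine ⟨∑ k ∈ Finset.range (n + 1), (f.coeff k).re * x ^ k, ?_, ?_, ?_⟩
  · rw [Polynomial.eval_eq_sum_range' (Nat.lt_succ_self n)]
    push_cast
    refine Finset.sum_congr rfl fun k _ => ?_
    rcases h01 k with h | h <;> simp [h]
  · rw [Finset.sum_range_succ, hm.coeff_natDegree]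
    simp only [Complex.one_re, one_mul]
    linarith
  · rw [Finset.sum_range_succ, hm.coeff_natDegree]
    simp only [Complex.one_re, one_mul]
    linarith


/-- With `a, d` monic of degree `p − 1` and `b, c` of degree at most `p − 2`, all with
coefficients in `{0,1}`, `p ≥ 3` and integer `q ≥ 5`, the unique root `λ` of
`(z − q)Δ(z) + S(z)` with `|z| ≥ 4` (where `Δ = ad − bc`, `S = a + d − b − c`)
satisfies `q − q^{−p+2} < λ < q`. -/
theorem perron_root_bounds (p q : ℕ) (hp : 3 ≤ p) (hq : 5 ≤ q)
    (a b c d : Polynomial ℂ)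
    (ha : a.Monic) (hadeg : a.natDegree = p - 1)
    (hd : d.Monic) (hddeg : d.natDegree = p - 1)
    (hbdeg : b.natDegree ≤ p - 2) (hcdeg : c.natDegree ≤ p - 2)
    (hac : ∀ k, a.coeff k = 0 ∨ a.coeff k = 1)
    (hbc : ∀ k, b.coeff k = 0 ∨ b.coeff k = 1)
    (hcc : ∀ k, c.coeff k = 0 ∨ c.coeff k = 1)
    (hdc : ∀ k, d.coeff k = 0 ∨ d.coeff k = 1)
    (lam : ℝ) (hlam4 : 4 ≤ lam)
    (hroot : ((X - C (q : ℂ)) * (a * d - b * c) + (a + d - b - c)).eval (lam : ℂ) = 0)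
    (huniq : ∀ z : ℂ, 4 ≤ ‖z‖ →
      ((X - C (q : ℂ)) * (a * d - b * c) + (a + d - b - c)).eval z = 0 → z = (lam : ℂ)) :
    (q : ℝ) - (q : ℝ) ^ ((2 : ℤ) - (p : ℤ)) < lam ∧ lam < q := by
  set Q : ℝ := (q : ℝ) with hQdef
  have hQ5 : (5:ℝ) ≤ Q := by rw [hQdef]; exact_mod_cast hq
  have hq0 : (0:ℝ) < Q := by linarith
  set n := p - 1 with hndef
  have hn2 : 2 ≤ n := by omega
  have hbn : b.natDegree < n := by omega
  have hcn : c.natDegree < n := by omega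
  obtain ⟨A, hAe, hA1, hA2⟩ := evalMonic a ha hac lam hlam4
  obtain ⟨D, hDe, hD1, hD2⟩ := evalMonic d hd hdc lam hlam4
  obtain ⟨B, hBe, hB1, hB2⟩ := eval01 b hbc n hbn lam hlam4
  obtain ⟨C', hCe, hC1, hC2⟩ := eval01 c hcc n hcn lam hlam4
  rw [hadeg] at hA1 hA2
  rw [hddeg] at hD1 hD2
  set t := lam ^ n with htdef
  have hlam0 : (0:ℝ) < lam := by linarith
  have ht4 : (4:ℝ) ^ n ≤ t := pow_le_pow_left₀ (by norm_num) hlam4 n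
  have h16 : (16:ℝ) ≤ (4:ℝ) ^ n := by
    calc (16:ℝ) = 4 ^ 2 := by norm_num
      _ ≤ 4 ^ n := pow_le_pow_right₀ (by norm_num) hn2
  have ht16 : (16:ℝ) ≤ t := le_trans h16 ht4
  have ht0 : (0:ℝ) < t := by linarith
  -- real equation
  have heq : (lam - Q) * (A * D - B * C') + (A + D - B - C') = 0 := by
    rw [hQdef]
    have h := hroot
    simp only [eval_add, eval_mul, eval_sub, eval_X, eval_C] at h
    rw [hAe, hBe, hCe, hDe] at h
    exact_mod_cast h
  have h2 : (Q - lam) * (A * D - B * C') = A + D - B - C' := by linear_combination -heq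
  have hAD : t * t ≤ A * D := mul_le_mul hA1 hD1 ht0.le (by linarith)
  have hBC : B * C' ≤ (t / 3) * (t / 3) :=
    mul_le_mul hB2.le hC2.le hC1 (by linarith)
  have hDel : 8 / 9 * t ^ 2 ≤ A * D - B * C' := by nlinarith [hAD, hBC]
  have hDelpos : 0 < A * D - B * C' := by nlinarith [hDel, ht16]
  have hS_pos : 0 < A + D - B - C' := by linarith
  have hS_lt : A + D - B - C' < 8 / 3 * t := by linarith
  have hQlam : 0 < Q - lam := by
    by_contra hcon
    push_neg at hcon
    have hx : 0 ≤ (lam - Q) * (A * D - B * C') := mul_nonneg (by linarith) hDelpos.le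
    linarith [h2, hS_pos, hx]
  have hlamQ : lam < Q := by linarith
  have hkey : (Q - lam) * t < 3 := by
    have h4 : (Q - lam) * (8 / 9 * t ^ 2) ≤ (Q - lam) * (A * D - B * C') :=
      mul_le_mul_of_nonneg_left hDel hQlam.le
    have h5 : (Q - lam) * (8 / 9 * t ^ 2) < 8 / 3 * t := by linarith [h4, h2, hS_lt]
    nlinarith [h5, ht0]
  -- Bernoulli
  have h4n0 : (0:ℝ) < (4:ℝ) ^ n := by positivity
  have h8n : (8:ℝ) * n ≤ 4 ^ n := by exact_mod_cast eight_mul_le_four_pow n hn2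
  have hA4 : (Q - lam) * 4 ^ n ≤ 3 := by linarith [mul_nonneg hQlam.le (by linarith : (0:ℝ) ≤ t - 4 ^ n), hkey]
  have hstep1 : (n:ℝ) * (Q - lam) ≤ 3 / 8 := by
    have hn0 : (0:ℝ) ≤ n := by positivity
    have hA5 : Q - lam ≤ 3 / 4 ^ n := by rw [le_div_iff₀ h4n0]; linarith
    have hA6 : (n:ℝ) * (Q - lam) ≤ (n:ℝ) * (3 / 4 ^ n) :=
      mul_le_mul_of_nonneg_left hA5 hn0
    have hA7 : (n:ℝ) * (3 / 4 ^ n) ≤ 3 / 8 := by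
      rw [mul_div_assoc'] at *
      rw [div_le_div_iff₀ h4n0 (by norm_num : (0:ℝ) < 8)]
      nlinarith [h8n]
    linarith
  have ha2 : (-2:ℝ) ≤ (lam - Q) / Q := by
    rw [le_div_iff₀ hq0]; linarith
  have hbern := one_add_mul_le_pow ha2 n
  have h1a : 1 + (lam - Q) / Q = lam / Q := by field_simp; ring
  rw [h1a, div_pow] at hbern
  have hu0 : (0:ℝ) < Q ^ n := by positivity
  have hbern2 : (37:ℝ) / 40 ≤ t / Q ^ n := by
    have heqr : (n:ℝ) * ((lam - Q) / Q) = -((n:ℝ) * (Q - lam) / Q) := by ring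
    rw [heqr] at hbern
    have hnum0 : 0 ≤ (n:ℝ) * (Q - lam) := by positivity
    have hdd : (n:ℝ) * (Q - lam) / Q ≤ (3 / 8) / 5 :=
      div_le_div₀ (by norm_num) hstep1 (by norm_num) hQ5
    have : (3:ℝ) / 8 / 5 = 3 / 40 := by norm_num
    rw [this] at hdd
    calc (37:ℝ) / 40 = 1 + -(3 / 40) := by norm_num
      _ ≤ 1 + -((n:ℝ) * (Q - lam) / Q) := by linarith
      _ ≤ lam ^ n / Q ^ n := hbern
      _ = t / Q ^ n := rfl
  have htQ : 37 / 40 * Q ^ n ≤ t := (le_div_iff₀ hu0).1 hbern2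
  have hfinal : 3 * Q ^ n < Q * t := by
    have hint1 : Q * (37 / 40 * Q ^ n) ≤ Q * t := mul_le_mul_of_nonneg_left htQ hq0.le
    have hint2 : 0 ≤ (Q - 5) * Q ^ n := mul_nonneg (by linarith) hu0.le
    nlinarith [hint1, hint2, hu0]
  have hzp : Q ^ ((2:ℤ) - (p:ℤ)) = Q / Q ^ n := by
    have hp1 : p = n + 1 := by omega
    rw [zpow_sub₀ (ne_of_gt hq0)]
    rw [show ((2:ℤ)) = ((2:ℕ):ℤ) from rfl, zpow_natCast, zpow_natCast]
    rw [hp1, pow_succ]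
    field_simp
    ring
  have hlast : Q - lam < Q / Q ^ n := by
    have h3t : (3:ℝ) / t < Q / Q ^ n := by
      rw [div_lt_div_iff₀ ht0 hu0]; nlinarith [hfinal]
    have : Q - lam < 3 / t := by rw [lt_div_iff₀ ht0]; linarith [hkey]
    linarith
  refine ⟨?_, hlamQ⟩
  rw [hzp]
  linarith
end

section
/- Let p ≥ 3 and let x ≥ 4 be real. Let 1 ≤ τ₁ ≤ τ₂ ≤ p−1 and σ₁ with τ₁ < σ₁ ≤ p−1 be integers. Then 2/(x^{p−1} + x^{p−1−σ₁} + x^{p−2−σ₁} + ⋯ + 1) − 1/(x^{p−1}+x^{p−1−τ₁}) − 1/(x^{p−1}+x^{p−1−τ₂}) > 0. -/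
/-- For `p ≥ 3`, real `x ≥ 4`, integers `1 ≤ τ₁ ≤ τ₂ ≤ p−1` and `τ₁ < σ₁ ≤ p−1`:
`2/(x^{p−1} + x^{p−1−σ₁} + ⋯ + 1) − 1/(x^{p−1}+x^{p−1−τ₁}) − 1/(x^{p−1}+x^{p−1−τ₂}) > 0`. -/
theorem r_diff_pos_case1 (p τ₁ τ₂ σ₁ : ℕ) (x : ℝ) (hp : 3 ≤ p) (hx : 4 ≤ x)
    (hτ₁ : 1 ≤ τ₁) (hτ₁₂ : τ₁ ≤ τ₂) (hτ₂ : τ₂ ≤ p - 1)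
    (hσ₁ : τ₁ < σ₁) (hσ₁p : σ₁ ≤ p - 1) :
    0 < 2 / (x ^ (p - 1) + ∑ j ∈ Finset.range (p - σ₁), x ^ j)
        - 1 / (x ^ (p - 1) + x ^ (p - 1 - τ₁))
        - 1 / (x ^ (p - 1) + x ^ (p - 1 - τ₂)) := by
  have hx0 : (0:ℝ) < x := by linarith
  have hx1 : (1:ℝ) ≤ x := by linarith
  set A := x ^ (p - 1) with hA
  set t₁ := x ^ (p - 1 - τ₁) with ht₁
  set t₂ := x ^ (p - 1 - τ₂) with ht₂
  set S := ∑ j ∈ Finset.range (p - σ₁), x ^ j with hS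
  have hA0 : 0 < A := pow_pos hx0 _
  have ht₁0 : 0 < t₁ := pow_pos hx0 _
  have ht₂0 : 0 < t₂ := pow_pos hx0 _
  have hS0 : 0 ≤ S := Finset.sum_nonneg fun j _ => (pow_pos hx0 j).le
  have ht₂₁ : t₂ ≤ t₁ := pow_le_pow_right₀ hx1 (by omega)
  have ht₁A : 4 * t₁ ≤ A := by
    have h1 : t₁ ≤ x ^ (p - 2) := pow_le_pow_right₀ hx1 (by omega)
    have h2 : A = x ^ (p - 2) * x := by
      rw [hA, ← pow_succ]; congr 1; omega
    nlinarith [pow_pos hx0 (p - 2)]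
  have hSt : 3 * S ≤ t₁ := by
    have hgeo : S * (x - 1) = x ^ (p - σ₁) - 1 := geom_sum_mul x (p - σ₁)
    have hle : x ^ (p - σ₁) ≤ t₁ := pow_le_pow_right₀ hx1 (by omega)
    nlinarith
  have hD : 0 < A + S := by linarith
  have hD1 : 0 < A + t₁ := by linarith
  have hD2 : 0 < A + t₂ := by linarith
  rw [sub_sub, sub_pos, div_add_div _ _ (ne_of_gt hD1) (ne_of_gt hD2),
    div_lt_div_iff₀ (mul_pos hD1 hD2) hD]
  nlinarith [mul_le_mul_of_nonneg_left hSt hA0.le, mul_le_mul_of_nonneg_left hSt ht₁0.le,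
    mul_pos hA0 ht₂0, mul_le_mul_of_nonneg_right ht₁A ht₁0.le, mul_nonneg hS0 ht₂0.le,
    mul_pos ht₁0 ht₂0, mul_le_mul_of_nonneg_left ht₂₁ hS0]
end

section
/- Let p ≥ 3, x ≥ 4 real, and 1 ≤ τ₁ ≤ p−2 an integer with τ₁ ≤ σ₁ − 1 for some σ₁ ≤ p−1. Then 2/(x^{p−1} + x^{p−1−σ₁} + ⋯ + 1) − 1/(x^{p−1}+x^{p−1−τ₁}) − 1/x^{p−1} > 0. -/
/-- For `p ≥ 3`, real `x ≥ 4`, integers `1 ≤ τ₁ ≤ p−2` and `τ₁ ≤ σ₁ − 1` with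
`σ₁ ≤ p−1`: `2/(x^{p−1} + x^{p−1−σ₁} + ⋯ + 1) − 1/(x^{p−1}+x^{p−1−τ₁}) − 1/x^{p−1} > 0`. -/
theorem r_diff_pos_case2 (p τ₁ σ₁ : ℕ) (x : ℝ) (hp : 3 ≤ p) (hx : 4 ≤ x)
    (hτ₁ : 1 ≤ τ₁) (hτ₁p : τ₁ ≤ p - 2) (hσ₁ : τ₁ < σ₁) (hσ₁p : σ₁ ≤ p - 1) :
    0 < 2 / (x ^ (p - 1) + ∑ j ∈ Finset.range (p - σ₁), x ^ j)
        - 1 / (x ^ (p - 1) + x ^ (p - 1 - τ₁))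
        - 1 / x ^ (p - 1) := by
  have hx0 : (0:ℝ) < x := by linarith
  have hx1 : (1:ℝ) ≤ x := by linarith
  set m := p - σ₁ with hm
  set S : ℝ := ∑ j ∈ Finset.range m, x ^ j with hS
  set N : ℝ := x ^ (p - 1) with hN
  set T : ℝ := x ^ (p - 1 - τ₁) with hT
  have hm1 : 1 ≤ m := by omega
  have hm2 : m + 1 ≤ p - 1 := by omega
  have hm3 : m ≤ p - 1 - τ₁ := by omega
  have hSpos : 0 < S := by
    apply Finset.sum_pos (fun j _ => pow_pos hx0 j)
    exact Finset.nonempty_range_iff.mpr (by omega)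
  have hNpos : 0 < N := pow_pos hx0 _
  have hTpos : 0 < T := pow_pos hx0 _
  have hgeom : S * (x - 1) = x ^ m - 1 := geom_sum_mul x m
  have hxm_le_T : x ^ m ≤ T := pow_le_pow_right₀ hx1 hm3
  have hxm1_le_N : x ^ (m + 1) ≤ N := pow_le_pow_right₀ hx1 hm2
  have hTS : 3 * S ≤ T := by nlinarith
  have hSN : 12 * S ≤ N := by
    have : 4 * x ^ m ≤ x ^ (m + 1) := by
      rw [pow_succ]
      nlinarith [pow_pos hx0 m]
    nlinarith
  have hA : 0 < N + S := by linarith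
  have hB : 0 < N + T := by linarith
  rw [sub_sub, sub_pos, div_add_div _ _ (ne_of_gt hB) (ne_of_gt hNpos),
    div_lt_div_iff₀ (by positivity) hA]
  nlinarith [mul_nonneg (by linarith : (0:ℝ) ≤ T - 3*S) (le_of_lt hNpos),
    mul_nonneg (by linarith : (0:ℝ) ≤ N - 12*S) (le_of_lt hTpos), hSpos.le, hNpos.le]
end

section
/- For integers t ≥ 2 and q ≥ t·2^{t−1} + 1, the inequality (q−1)(t+1) − t·q·(1 + 1/q)^{t−1} ≥ 0 holds. -/
lemma bernoulli_upper (x : ℝ) (hx0 : 0 ≤ x) (hx1 : x ≤ 1) :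
    ∀ n : ℕ, (1 + x) ^ n ≤ 1 + (2 ^ n - 1) * x := by
  intro n
  induction n with
  | zero => simp
  | succ n ih =>
    have h2 : (1:ℝ) ≤ 2 ^ n := by exact_mod_cast Nat.one_le_two_pow
    have h2' : (2:ℝ) ^ (n + 1) = 2 * 2 ^ n := by ring
    have hpos : (0:ℝ) ≤ (1 + x) ^ n := by positivity
    calc (1 + x) ^ (n + 1) = (1 + x) ^ n * (1 + x) := by ring
    _ ≤ (1 + (2 ^ n - 1) * x) * (1 + x) := by nlinarith
    _ ≤ 1 + (2 ^ (n + 1) - 1) * x := by nlinarith [mul_nonneg (mul_nonneg (sub_nonneg.2 h2) hx0) (sub_nonneg.2 hx1)]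

/-- For integers `t ≥ 2` and `q ≥ t·2^{t−1} + 1`:
`(q−1)(t+1) − t·q·(1 + 1/q)^{t−1} ≥ 0`. -/
theorem q_condition_holds (t q : ℕ) (ht : 2 ≤ t) (hq : t * 2 ^ (t - 1) + 1 ≤ q) :
    0 ≤ ((q : ℝ) - 1) * ((t : ℝ) + 1) - (t : ℝ) * (q : ℝ) * (1 + 1 / (q : ℝ)) ^ (t - 1) := by
  have hq1 : 1 ≤ q := le_trans (Nat.le_add_left 1 _) hq
  have hQ : (0:ℝ) < (q : ℝ) := by exact_mod_cast Nat.lt_of_lt_of_le Nat.zero_lt_one hq1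
  have hx0 : (0:ℝ) ≤ 1 / (q : ℝ) := by positivity
  have hx1 : 1 / (q : ℝ) ≤ 1 := by
    rw [div_le_one hQ]; exact_mod_cast hq1
  have hb := bernoulli_upper (1 / (q : ℝ)) hx0 hx1 (t - 1)
  have hqc : ((t : ℝ) * 2 ^ (t - 1) + 1) ≤ (q : ℝ) := by exact_mod_cast hq
  have ht2 : (2:ℝ) ≤ (t : ℝ) := by exact_mod_cast ht
  have hkey : (t : ℝ) * (q : ℝ) * (1 + 1 / (q : ℝ)) ^ (t - 1)
      ≤ (t : ℝ) * (q : ℝ) * (1 + (2 ^ (t - 1) - 1) * (1 / (q : ℝ))) := by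
    apply mul_le_mul_of_nonneg_left hb (by positivity)
  have hinv : (q : ℝ) * (1 / (q : ℝ)) = 1 := mul_one_div_cancel hQ.ne'
  nlinarith [hkey, hqc]
end

section
/- Let t ≥ 2, q ≥ 2 with (q−1)(t+1) − t·q·(1+1/q)^{t−1} ≥ 0, and let 1 ≤ τ₁ ≤ τ₂ ≤ ⋯ ≤ τ_t ≤ p−1 be integers. For 1 ≤ k ≤ t define β_k = Σ_{1 ≤ i₁ < ⋯ < i_k ≤ t} q^{−τ_{i₁}}⋯q^{−τ_{i_k}}. Then (q−1)(β₁ + 2β₂ + ⋯ + tβ_t) − q^{−τ₁}(t + (t−1)β₁ + (t−2)β₂ + ⋯ + β_{t−1}) > 0. -/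
/-- `beta t q τ k` is the `k`-th elementary symmetric polynomial of the quantities
`q^{−τ₁}, …, q^{−τ_t}`. -/
noncomputable def beta (t q : ℕ) (τ : Fin t → ℕ) (k : ℕ) : ℝ :=
  ∑ s ∈ Finset.powersetCard k (Finset.univ : Finset (Fin t)),
    ∏ i ∈ s, ((q : ℝ) ^ (τ i))⁻¹

lemma beta_nonneg (t q : ℕ) (τ : Fin t → ℕ) (k : ℕ) : 0 ≤ beta t q τ k := by
  unfold beta
  apply Finset.sum_nonneg
  intro s _
  apply Finset.prod_nonneg
  intro i _
  positivity

lemma beta_one (t q : ℕ) (τ : Fin t → ℕ) :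
    beta t q τ 1 = ∑ i : Fin t, ((q : ℝ) ^ (τ i))⁻¹ := by
  unfold beta
  rw [Finset.powersetCard_one, Finset.sum_map]
  simp

lemma beta_le (t q : ℕ) (hq : 2 ≤ q) (τ : Fin t → ℕ) (hmono : Monotone τ)
    (hτ1 : ∀ i, 1 ≤ τ i) (ht : 0 < t) (k : ℕ) (hk : 1 ≤ k) :
    beta t q τ k ≤ (t.choose k : ℝ) *
      (((q : ℝ) ^ (τ ⟨0, ht⟩))⁻¹ * ((q : ℝ)⁻¹) ^ (k - 1)) := by
  have hq1 : (1:ℝ) ≤ (q:ℝ) := by exact_mod_cast Nat.one_le_of_lt hq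
  have hq0 : (0:ℝ) < (q:ℝ) := by linarith
  unfold beta
  have hbd : ∀ s ∈ Finset.powersetCard k (Finset.univ : Finset (Fin t)),
      ∏ i ∈ s, ((q : ℝ) ^ (τ i))⁻¹ ≤ ((q : ℝ) ^ (τ ⟨0, ht⟩))⁻¹ * ((q : ℝ)⁻¹) ^ (k - 1) := by
    intro s hs
    have hcard : s.card = k := (Finset.mem_powersetCard.mp hs).2
    have hne : s.Nonempty := Finset.card_pos.mp (by omega)
    obtain ⟨j, hj⟩ := hne
    rw [← Finset.mul_prod_erase s _ hj]
    have hxj : ((q : ℝ) ^ (τ j))⁻¹ ≤ ((q : ℝ) ^ (τ ⟨0, ht⟩))⁻¹ := by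
      have hτle : τ ⟨0, ht⟩ ≤ τ j := hmono (Fin.mk_le_of_le_val (Nat.zero_le _))
      gcongr
    have hrest : ∏ i ∈ s.erase j, ((q : ℝ) ^ (τ i))⁻¹ ≤ ((q : ℝ)⁻¹) ^ (k - 1) := by
      have hcard' : (s.erase j).card = k - 1 := by
        rw [Finset.card_erase_of_mem hj, hcard]
      rw [← hcard', ← Finset.prod_const]
      apply Finset.prod_le_prod
      · intro i _; positivity
      · intro i _
        have h2 : (q : ℝ) ^ 1 ≤ (q : ℝ) ^ (τ i) := pow_le_pow_right₀ hq1 (hτ1 i)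
        rw [pow_one] at h2
        exact inv_anti₀ hq0 h2
    apply mul_le_mul hxj hrest
    · apply Finset.prod_nonneg; intro i _; positivity
    · positivity
  calc ∑ s ∈ Finset.powersetCard k (Finset.univ : Finset (Fin t)),
        ∏ i ∈ s, ((q : ℝ) ^ (τ i))⁻¹
      ≤ (Finset.powersetCard k (Finset.univ : Finset (Fin t))).card •
        (((q : ℝ) ^ (τ ⟨0, ht⟩))⁻¹ * ((q : ℝ)⁻¹) ^ (k - 1)) :=
        Finset.sum_le_card_nsmul _ _ _ hbd
    _ = (t.choose k : ℝ) * (((q : ℝ) ^ (τ ⟨0, ht⟩))⁻¹ * ((q : ℝ)⁻¹) ^ (k - 1)) := by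
        rw [Finset.card_powersetCard, Finset.card_univ, Fintype.card_fin, nsmul_eq_mul]

lemma aux_choose (t k : ℕ) (ht : 1 ≤ t) : (t - k) * t.choose k = t * (t - 1).choose k := by
  have h1 := Nat.add_one_mul_choose_eq (t - 1) k
  rw [Nat.sub_add_cancel ht] at h1
  rw [h1, Nat.choose_succ_right_eq, Nat.mul_comm]

lemma binom_sum (t : ℕ) (ht : 2 ≤ t) (z : ℝ) (hz : 0 ≤ z) :
    ∑ k ∈ Finset.Icc 1 (t - 1), ((t : ℝ) - (k : ℝ)) * (t.choose k : ℝ) * z ^ k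
      = (t : ℝ) * ((1 + z) ^ (t - 1) - 1) := by
  have h1 : ∑ k ∈ Finset.Icc 1 (t - 1), ((t : ℝ) - (k : ℝ)) * (t.choose k : ℝ) * z ^ k
      = ∑ k ∈ Finset.Icc 1 (t - 1), (t : ℝ) * (((t - 1).choose k : ℝ) * z ^ k) := by
    apply Finset.sum_congr rfl
    intro k hk
    obtain ⟨hk1, hk2⟩ := Finset.mem_Icc.mp hk
    have hkt : k ≤ t := by omega
    have hch := aux_choose t k (by omega)
    have hcast : ((t : ℝ) - (k : ℝ)) * (t.choose k : ℝ) = (t : ℝ) * ((t - 1).choose k : ℝ) := by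
      have h := congrArg (fun n : ℕ => (n : ℝ)) hch
      push_cast [Nat.cast_sub hkt] at h
      linarith
    linear_combination z ^ k * hcast
  rw [h1, ← Finset.mul_sum]
  congr 1
  have hbin : (z + 1) ^ (t - 1) = ∑ k ∈ Finset.range t, z ^ k * ((t - 1).choose k : ℝ) := by
    rw [add_pow]
    have htt : t - 1 + 1 = t := by omega
    rw [htt]
    apply Finset.sum_congr rfl
    intro k _
    rw [one_pow, mul_one]
  have hrange : Finset.range t = insert 0 (Finset.Icc 1 (t - 1)) := by
    ext m
    simp only [Finset.mem_range, Finset.mem_insert, Finset.mem_Icc]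
    omega
  rw [hrange, Finset.sum_insert (by simp)] at hbin
  simp only [pow_zero, Nat.choose_zero_right, Nat.cast_one, one_mul] at hbin
  have hcg : ∑ k ∈ Finset.Icc 1 (t - 1), ((t - 1).choose k : ℝ) * z ^ k
      = ∑ k ∈ Finset.Icc 1 (t - 1), z ^ k * ((t - 1).choose k : ℝ) := by
    apply Finset.sum_congr rfl; intro k _; ring
  have hcomm : (1 + z) ^ (t - 1) = (z + 1) ^ (t - 1) := by ring_nf
  rw [hcg, hcomm, hbin]
  ring

/-- Core arithmetic: deduce `tB ≤ q − 1` from the hypothesis and Bernoulli. -/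
lemma core_final (qR tR z B : ℝ) (hq1 : 1 < qR) (htR : 2 ≤ tR) (hz : qR * z = 1)
    (hz0 : 0 < z) (hber : 1 + (tR - 1) * z ≤ B)
    (hcond : 0 ≤ (qR - 1) * (tR + 1) - tR * qR * B) :
    tR * B ≤ qR - 1 := by
  have hB1 : (1:ℝ) ≤ B := by nlinarith
  have htq : (0:ℝ) ≤ tR * qR := by nlinarith
  have hkey := mul_le_mul_of_nonneg_left hber htq
  have hexp : tR * qR * (1 + (tR - 1) * z) = tR * qR + tR * (tR - 1) * (qR * z) := by ring
  rw [hexp, hz, mul_one] at hkey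
  have hqt : tR * tR + 1 ≤ qR := by nlinarith
  have hprod : 0 ≤ (qR - (tR + 1)) * (tR * B) := by
    apply mul_nonneg (by nlinarith)
    nlinarith
  nlinarith [hprod]

/-- Core arithmetic: final assembly of the inequality from the key bounds. -/
lemma central_core (qR tR X S1 S2 B1 B : ℝ) (hq1 : 1 < qR) (htR : 2 ≤ tR)
    (hX0 : 0 < X) (hb1 : X < B1) (hS1 : B1 ≤ S1)
    (hXS2 : X * S2 ≤ B1 * (tR * (B - 1)))
    (hfinal : tR * B ≤ qR - 1) :
    0 < (qR - 1) * S1 - X * (tR + S2) := by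
  have hB10 : 0 ≤ B1 := le_of_lt (lt_trans hX0 hb1)
  have h1 : X * tR < B1 * tR := mul_lt_mul_of_pos_right hb1 (by linarith)
  have h2 : B1 * (tR * B) ≤ B1 * (qR - 1) := mul_le_mul_of_nonneg_left hfinal hB10
  have h3 : (qR - 1) * B1 ≤ (qR - 1) * S1 :=
    mul_le_mul_of_nonneg_left hS1 (by linarith)
  have e1 : X * (tR + S2) = X * tR + X * S2 := by ring
  have e2 : B1 * tR + B1 * (tR * (B - 1)) = B1 * (tR * B) := by ring
  have e3 : B1 * (qR - 1) = (qR - 1) * B1 := by ring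
  linarith

/-- Central inequality: for `t ≥ 2`, `q ≥ 2` satisfying
`(q−1)(t+1) − t·q·(1+1/q)^{t−1} ≥ 0`, and `1 ≤ τ₁ ≤ ⋯ ≤ τ_t ≤ p−1`,
`(q−1)(β₁ + 2β₂ + ⋯ + tβ_t) − q^{−τ₁}(t + (t−1)β₁ + (t−2)β₂ + ⋯ + β_{t−1}) > 0`. -/
theorem central_inequality (t q p : ℕ) (ht : 2 ≤ t) (hq : 2 ≤ q) (hp : 2 ≤ p)
    (hcond : 0 ≤ ((q : ℝ) - 1) * ((t : ℝ) + 1) -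
      (t : ℝ) * (q : ℝ) * (1 + 1 / (q : ℝ)) ^ (t - 1))
    (τ : Fin t → ℕ) (hmono : Monotone τ)
    (hτ1 : ∀ i, 1 ≤ τ i) (hτp : ∀ i, τ i ≤ p - 1) :
    0 < ((q : ℝ) - 1) * (∑ k ∈ Finset.Icc 1 t, (k : ℝ) * beta t q τ k)
      - ((q : ℝ) ^ (τ ⟨0, by omega⟩))⁻¹ *
        ((t : ℝ) + ∑ k ∈ Finset.Icc 1 (t - 1), ((t : ℝ) - (k : ℝ)) * beta t q τ k) := by
  have ht0 : 0 < t := by omega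
  have hq1 : (1:ℝ) < (q:ℝ) := by exact_mod_cast hq
  have hq0 : (0:ℝ) < (q:ℝ) := by linarith
  have htR : (2:ℝ) ≤ (t:ℝ) := by exact_mod_cast ht
  have hz0 : (0:ℝ) < (q:ℝ)⁻¹ := by positivity
  have hqz : (q:ℝ) * (q:ℝ)⁻¹ = 1 := mul_inv_cancel₀ (ne_of_gt hq0)
  have hX0 : (0:ℝ) < ((q : ℝ) ^ (τ ⟨0, ht0⟩))⁻¹ := by positivity
  have hXz : ((q : ℝ) ^ (τ ⟨0, ht0⟩))⁻¹ ≤ (q:ℝ)⁻¹ := by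
    have h1 : (q : ℝ) ^ 1 ≤ (q : ℝ) ^ (τ ⟨0, ht0⟩) := pow_le_pow_right₀ hq1.le (hτ1 _)
    rw [pow_one] at h1
    exact inv_anti₀ hq0 h1
  have hXq : ((q : ℝ) ^ (τ ⟨0, ht0⟩))⁻¹ * (q:ℝ) ≤ 1 := by
    have h := mul_le_mul_of_nonneg_right hXz hq0.le
    rw [inv_mul_cancel₀ (ne_of_gt hq0)] at h
    exact h
  -- β₁ strictly exceeds X
  have hb1 : ((q : ℝ) ^ (τ ⟨0, ht0⟩))⁻¹ < beta t q τ 1 := by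
    rw [beta_one]
    have h1t : (⟨1, by omega⟩ : Fin t) ≠ (⟨0, ht0⟩ : Fin t) := by
      simp [Fin.ext_iff]
    exact Finset.single_lt_sum (f := fun i : Fin t => ((q : ℝ) ^ (τ i))⁻¹) h1t
      (Finset.mem_univ _) (Finset.mem_univ _)
      (by positivity) (fun k _ _ => by positivity)
  -- β₁ ≤ S1
  have hS1 : beta t q τ 1 ≤ ∑ k ∈ Finset.Icc 1 t, (k : ℝ) * beta t q τ k := by
    have h1 : (1:ℕ) ∈ Finset.Icc 1 t := by
      simp only [Finset.mem_Icc]; omega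
    have h := Finset.single_le_sum (f := fun k : ℕ => (k:ℝ) * beta t q τ k)
      (fun k _ => mul_nonneg (by positivity) (beta_nonneg t q τ k)) h1
    simpa using h
  -- bound on S2
  have hS2 : ∑ k ∈ Finset.Icc 1 (t - 1), ((t : ℝ) - (k : ℝ)) * beta t q τ k
      ≤ ((q : ℝ) ^ (τ ⟨0, ht0⟩))⁻¹ * (q:ℝ) *
        ((t : ℝ) * ((1 + (q:ℝ)⁻¹) ^ (t - 1) - 1)) := by
    have step1 : ∑ k ∈ Finset.Icc 1 (t - 1), ((t : ℝ) - (k : ℝ)) * beta t q τ k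
        ≤ ∑ k ∈ Finset.Icc 1 (t - 1), ((t:ℝ) - (k:ℝ)) *
          ((t.choose k : ℝ) * (((q : ℝ) ^ (τ ⟨0, ht0⟩))⁻¹ * ((q : ℝ)⁻¹) ^ (k - 1))) := by
      apply Finset.sum_le_sum
      intro k hk
      obtain ⟨hk1, hk2⟩ := Finset.mem_Icc.mp hk
      have hcoef : (0:ℝ) ≤ (t:ℝ) - (k:ℝ) := by
        have hkt : (k:ℝ) ≤ (t:ℝ) := by exact_mod_cast (by omega : k ≤ t)
        linarith
      exact mul_le_mul_of_nonneg_left (beta_le t q hq τ hmono hτ1 ht0 k hk1) hcoef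
    have step2 : ∑ k ∈ Finset.Icc 1 (t - 1), ((t:ℝ) - (k:ℝ)) *
          ((t.choose k : ℝ) * (((q : ℝ) ^ (τ ⟨0, ht0⟩))⁻¹ * ((q : ℝ)⁻¹) ^ (k - 1)))
        = ((q : ℝ) ^ (τ ⟨0, ht0⟩))⁻¹ * (q:ℝ) *
          ∑ k ∈ Finset.Icc 1 (t - 1), ((t:ℝ) - (k:ℝ)) * (t.choose k : ℝ) * ((q:ℝ)⁻¹) ^ k := by
      rw [Finset.mul_sum]
      apply Finset.sum_congr rfl
      intro k hk
      obtain ⟨hk1, _⟩ := Finset.mem_Icc.mp hk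
      obtain ⟨m, rfl⟩ : ∃ m, k = m + 1 := ⟨k - 1, by omega⟩
      simp only [Nat.add_sub_cancel]
      have hzk : (q:ℝ) * ((q:ℝ)⁻¹) ^ (m + 1) = ((q:ℝ)⁻¹) ^ m := by
        rw [pow_succ]
        linear_combination ((q:ℝ)⁻¹) ^ m * hqz
      push_cast
      linear_combination (((m:ℝ) + 1) - (t:ℝ)) * ((t.choose (m+1) : ℝ)) *
        ((q : ℝ) ^ (τ (⟨0, ht0⟩ : Fin t)))⁻¹ * hzk
    have step3 := binom_sum t ht ((q:ℝ)⁻¹) hz0.le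
    calc ∑ k ∈ Finset.Icc 1 (t - 1), ((t : ℝ) - (k : ℝ)) * beta t q τ k
        ≤ ∑ k ∈ Finset.Icc 1 (t - 1), ((t:ℝ) - (k:ℝ)) *
          ((t.choose k : ℝ) * (((q : ℝ) ^ (τ ⟨0, ht0⟩))⁻¹ * ((q : ℝ)⁻¹) ^ (k - 1))) := step1
      _ = ((q : ℝ) ^ (τ ⟨0, ht0⟩))⁻¹ * (q:ℝ) *
          ∑ k ∈ Finset.Icc 1 (t - 1), ((t:ℝ) - (k:ℝ)) * (t.choose k : ℝ) * ((q:ℝ)⁻¹) ^ k := step2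
      _ = ((q : ℝ) ^ (τ ⟨0, ht0⟩))⁻¹ * (q:ℝ) *
          ((t : ℝ) * ((1 + (q:ℝ)⁻¹) ^ (t - 1) - 1)) := by rw [step3]
  -- nonnegativity of M
  have hB1' : (1:ℝ) ≤ (1 + (q:ℝ)⁻¹) ^ (t - 1) := one_le_pow₀ (by linarith)
  have hM0 : (0:ℝ) ≤ (t : ℝ) * ((1 + (q:ℝ)⁻¹) ^ (t - 1) - 1) :=
    mul_nonneg (by linarith) (by linarith)
  -- X·S2 ≤ β₁·M
  have hXS2 : ((q : ℝ) ^ (τ ⟨0, ht0⟩))⁻¹ *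
        (∑ k ∈ Finset.Icc 1 (t - 1), ((t : ℝ) - (k : ℝ)) * beta t q τ k)
      ≤ beta t q τ 1 * ((t : ℝ) * ((1 + (q:ℝ)⁻¹) ^ (t - 1) - 1)) := by
    have h1 := mul_le_mul_of_nonneg_left hS2 hX0.le
    have h2 : ((q : ℝ) ^ (τ ⟨0, ht0⟩))⁻¹ * (((q : ℝ) ^ (τ ⟨0, ht0⟩))⁻¹ * (q:ℝ) *
          ((t : ℝ) * ((1 + (q:ℝ)⁻¹) ^ (t - 1) - 1)))
        ≤ 1 * (((q : ℝ) ^ (τ ⟨0, ht0⟩))⁻¹ * ((t : ℝ) * ((1 + (q:ℝ)⁻¹) ^ (t - 1) - 1))) := by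
      have h3 := mul_le_mul_of_nonneg_right hXq (mul_nonneg hX0.le hM0)
      calc ((q : ℝ) ^ (τ ⟨0, ht0⟩))⁻¹ * (((q : ℝ) ^ (τ ⟨0, ht0⟩))⁻¹ * (q:ℝ) *
            ((t : ℝ) * ((1 + (q:ℝ)⁻¹) ^ (t - 1) - 1)))
          = (((q : ℝ) ^ (τ ⟨0, ht0⟩))⁻¹ * (q:ℝ)) * (((q : ℝ) ^ (τ ⟨0, ht0⟩))⁻¹ *
            ((t : ℝ) * ((1 + (q:ℝ)⁻¹) ^ (t - 1) - 1))) := by ring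
        _ ≤ 1 * (((q : ℝ) ^ (τ ⟨0, ht0⟩))⁻¹ *
            ((t : ℝ) * ((1 + (q:ℝ)⁻¹) ^ (t - 1) - 1))) := h3
    rw [one_mul] at h2
    have h4 : ((q : ℝ) ^ (τ ⟨0, ht0⟩))⁻¹ * ((t : ℝ) * ((1 + (q:ℝ)⁻¹) ^ (t - 1) - 1))
        ≤ beta t q τ 1 * ((t : ℝ) * ((1 + (q:ℝ)⁻¹) ^ (t - 1) - 1)) :=
      mul_le_mul_of_nonneg_right hb1.le hM0
    linarith
  -- Bernoulli
  have hber : 1 + ((t:ℝ) - 1) * (q:ℝ)⁻¹ ≤ (1 + (q:ℝ)⁻¹) ^ (t - 1) := by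
    have h := one_add_mul_le_pow (a := (q:ℝ)⁻¹) (by linarith) (t - 1)
    have hc : ((t - 1 : ℕ) : ℝ) = (t:ℝ) - 1 := by
      push_cast [Nat.cast_sub (by omega : 1 ≤ t)]
      ring
    rw [hc] at h
    exact h
  have hcond' : 0 ≤ ((q:ℝ) - 1) * ((t:ℝ) + 1) - (t:ℝ) * (q:ℝ) * (1 + (q:ℝ)⁻¹) ^ (t - 1) := by
    rw [← one_div]
    exact hcond
  have hfinal : (t:ℝ) * (1 + (q:ℝ)⁻¹) ^ (t - 1) ≤ (q:ℝ) - 1 :=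
    core_final (q:ℝ) (t:ℝ) ((q:ℝ)⁻¹) ((1 + (q:ℝ)⁻¹) ^ (t - 1)) hq1 htR hqz hz0 hber hcond'
  exact central_core (q:ℝ) (t:ℝ) (((q : ℝ) ^ (τ ⟨0, ht0⟩))⁻¹)
    (∑ k ∈ Finset.Icc 1 t, (k : ℝ) * beta t q τ k)
    (∑ k ∈ Finset.Icc 1 (t - 1), ((t : ℝ) - (k : ℝ)) * beta t q τ k)
    (beta t q τ 1) ((1 + (q:ℝ)⁻¹) ^ (t - 1)) hq1 htR hX0 hb1 hS1 hXS2 hfinal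
end
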